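/- arXiv:1710.11591 — 4 statements merged into one kernel-verified Lean document; each statement's English description precedes it below -/
import Mathlib

section
/- Let ω ∈ ℝ^d with ω ≠ 0 and c = ω ⊗ ω (i.e., c_{ij} = ω_i ω_j). A function u ∈ C²(Ω) on an open hypercube Ω ⊂ ℝ^d satisfies ∂²u/∂x_i∂x_j + c_{ij} u = 0 for all i,j = 1,…,d if and only if there exist constants C₁, C₂ ∈ ℝ such that u(x) = C₁ cos(ω·x) + C₂ sin(ω·x) for all x ∈ Ω. -/
/-!
Write `θ = ⟪ω, ·⟫`. For `e ⊥ ω` the equation gives `∂_e ∂_ω u = 0`, so `∂_ω u` is invariant under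
translation along `e`, hence so is `∂_ω ∂_ω u = -‖ω‖⁴ u`; thus `u` is invariant too and `∂_e u = 0`.
So `∇u = g ω` with `g = ∂_ω u / ‖ω‖²`, and the equation gives `∇g = -u ω`. Then `u cos θ - g sin θ`
and `u sin θ + g cos θ` have zero gradient, hence are constants `C₁, C₂` on the connected set `Ω`,
and `u = C₁ cos θ + C₂ sin θ`.
-/

open Set Filter Topology Real
open scoped RealInnerProductSpace

section Calculus

variable {E F : Type*} [NormedAddCommGroup E] [NormedSpace ℝ E]
  [NormedAddCommGroup F] [NormedSpace ℝ F]

theorem ContDiffOn.differentiableAt_fderiv {Ω : Set E} {u : E → F} (hΩ : IsOpen Ω)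
    (hu : ContDiffOn ℝ 2 u Ω) {x : E} (hx : x ∈ Ω) : DifferentiableAt ℝ (fderiv ℝ u) x :=
  ((hu.fderiv_of_isOpen hΩ (m := 1) (by norm_num)).differentiableOn one_ne_zero).differentiableAt
    (hΩ.mem_nhds hx)

theorem fderiv_fderiv_apply_const {u : E → F} {x : E} (hu : DifferentiableAt ℝ (fderiv ℝ u) x)
    (v w : E) : fderiv ℝ (fun y => fderiv ℝ u y w) x v = fderiv ℝ (fderiv ℝ u) x v w := by
  rw [fderiv_clm_apply hu (differentiableAt_const w)]
  simp

theorem Convex.apply_add_eq_of_fderiv_apply_eq_zero {Ω : Set E} (hΩ : Convex ℝ Ω) {f : E → F}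
    {f' : E → E →L[ℝ] F} (hf : ∀ z ∈ Ω, HasFDerivAt f (f' z) z) {a : E}
    (ha : ∀ z ∈ Ω, f' z a = 0) {y : E} (hy : y ∈ Ω) (hya : y + a ∈ Ω) : f (y + a) = f y := by
  have hseg : ∀ t ∈ Icc (0 : ℝ) 1, y + t • a ∈ Ω := fun t ht => hΩ.add_smul_mem hy hya ht
  have hderiv : ∀ t ∈ Icc (0 : ℝ) 1, HasDerivAt (fun t : ℝ => f (y + t • a)) 0 t := by
    intro t ht
    have := (hf _ (hseg t ht)).comp_hasDerivAt t (((hasDerivAt_id t).smul_const a).const_add y)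
    simpa [Function.comp_def, ha _ (hseg t ht)] using this
  simpa using constant_of_has_deriv_right_zero
    (fun t ht => (hderiv t ht).continuousAt.continuousWithinAt)
    (fun t ht => (hderiv t (Ico_subset_Icc_self ht)).hasDerivWithinAt) 1
    (right_mem_Icc.2 zero_le_one)

theorem IsOpen.exists_eq_cos_add_sin_of_hasFDerivAt {Ω : Set E} (hΩ : IsOpen Ω)
    (hΩc : IsPreconnected Ω) {f g θ : E → ℝ} {θ' : E → E →L[ℝ] ℝ}
    (hθ : ∀ x ∈ Ω, HasFDerivAt θ (θ' x) x) (hf : ∀ x ∈ Ω, HasFDerivAt f (g x • θ' x) x)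
    (hg : ∀ x ∈ Ω, HasFDerivAt g (-f x • θ' x) x) :
    ∃ C₁ C₂ : ℝ, ∀ x ∈ Ω, f x = C₁ * cos (θ x) + C₂ * sin (θ x) := by
  have hconst : ∀ A : E → ℝ, (∀ x ∈ Ω, HasFDerivAt A 0 x) → ∃ C, ∀ x ∈ Ω, A x = C :=
    fun A hA => hΩ.exists_is_const_of_fderiv_eq_zero (𝕜 := ℝ) hΩc
      (fun x hx => (hA x hx).differentiableAt.differentiableWithinAt) fun x hx => (hA x hx).fderiv
  obtain ⟨C₁, h₁⟩ := hconst (fun x => f x * cos (θ x) - g x * sin (θ x)) fun x hx => by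
    refine (((hf x hx).fun_mul (hθ x hx).cos).sub ((hg x hx).fun_mul (hθ x hx).sin)).congr_fderiv ?_
    ext v; simp; ring
  obtain ⟨C₂, h₂⟩ := hconst (fun x => f x * sin (θ x) + g x * cos (θ x)) fun x hx => by
    refine (((hf x hx).fun_mul (hθ x hx).sin).add ((hg x hx).fun_mul (hθ x hx).cos)).congr_fderiv ?_
    ext v; simp; ring
  refine ⟨C₁, C₂, fun x hx => ?_⟩
  rw [← h₁ x hx, ← h₂ x hx]
  linear_combination (f x) * (sin_sq_add_cos_sq (θ x)).symm

end Calculus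

section Oscillator

variable {E : Type*} [NormedAddCommGroup E] [InnerProductSpace ℝ E]

/-- `fderiv ℝ (fderiv ℝ u) x v w` is `∂_v ∂_w u (x)`, so this is the coordinate-free form of
`∂²u/∂xᵢ∂xⱼ + ωᵢ ωⱼ u = 0`. -/
def SolvesOscPDE (ω : E) (u : E → ℝ) (Ω : Set E) : Prop :=
  ∀ x ∈ Ω, ∀ v w : E, fderiv ℝ (fderiv ℝ u) x v w + ⟪ω, v⟫ * ⟪ω, w⟫ * u x = 0

theorem hasFDerivAt_cos_add_sin_inner (ω : E) (A B : ℝ) (x : E) :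
    HasFDerivAt (fun y => A * cos ⟪ω, y⟫ + B * sin ⟪ω, y⟫)
      ((B * cos ⟪ω, x⟫ + -A * sin ⟪ω, x⟫) • innerSL ℝ ω) x := by
  have hθ : HasFDerivAt (fun y => ⟪ω, y⟫) (innerSL ℝ ω) x := (innerSL ℝ ω).hasFDerivAt
  refine ((hθ.cos.const_mul A).add (hθ.sin.const_mul B)).congr_fderiv ?_
  ext v; simp; ring

theorem solvesOscPDE_of_eqOn_cos_add_sin {Ω : Set E} (hΩ : IsOpen Ω) {ω : E} {u : E → ℝ}
    {C₁ C₂ : ℝ} (h : ∀ x ∈ Ω, u x = C₁ * cos ⟪ω, x⟫ + C₂ * sin ⟪ω, x⟫) :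
    SolvesOscPDE ω u Ω := by
  intro x hx v w
  have hfderiv : fderiv ℝ u =ᶠ[𝓝 x]
      fun y => (C₂ * cos ⟪ω, y⟫ + -C₁ * sin ⟪ω, y⟫) • innerSL ℝ ω := by
    filter_upwards [hΩ.mem_nhds hx] with y hy
    have huy : u =ᶠ[𝓝 y] fun z => C₁ * cos ⟪ω, z⟫ + C₂ * sin ⟪ω, z⟫ :=
      eventually_of_mem (hΩ.mem_nhds hy) h
    rw [huy.fderiv_eq, (hasFDerivAt_cos_add_sin_inner ω C₁ C₂ y).fderiv]
  rw [hfderiv.fderiv_eq,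
    ((hasFDerivAt_cos_add_sin_inner ω C₂ (-C₁) x).smul_const (innerSL ℝ ω)).fderiv, h x hx]
  simp; ring

namespace SolvesOscPDE

variable {Ω : Set E} {ω : E} {u : E → ℝ}

theorem hasFDerivAt_fderiv_apply (h : SolvesOscPDE ω u Ω) (hΩ : IsOpen Ω)
    (hu : ContDiffOn ℝ 2 u Ω) {x : E} (hx : x ∈ Ω) (w : E) :
    HasFDerivAt (fun y => fderiv ℝ u y w) (-(⟪ω, w⟫ * u x) • innerSL ℝ ω) x := by
  refine ((hu.differentiableAt_fderiv hΩ hx).hasFDerivAt.clm_apply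
    (hasFDerivAt_const w x)).congr_fderiv ?_
  ext v
  simp only [ContinuousLinearMap.comp_zero, zero_add, ContinuousLinearMap.flip_apply, neg_smul,
    neg_apply, smul_apply, coe_innerSL_apply, smul_eq_mul]
  linarith [h x hx v w]

theorem apply_add_eq_of_inner_eq_zero (h : SolvesOscPDE ω u Ω) (hΩ : IsOpen Ω)
    (hΩc : Convex ℝ Ω) (hu : ContDiffOn ℝ 2 u Ω) (hω : ω ≠ 0) {a : E} (ha : ⟪ω, a⟫ = 0)
    {x : E} (hx : ∀ᶠ y in 𝓝 x, y ∈ Ω ∧ y + a ∈ Ω) : u (x + a) = u x := by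
  have hinvariant : (fun y => fderiv ℝ u (y + a) ω) =ᶠ[𝓝 x] fun y => fderiv ℝ u y ω :=
    hx.mono fun y hy => hΩc.apply_add_eq_of_fderiv_apply_eq_zero
      (fun z hz => h.hasFDerivAt_fderiv_apply hΩ hu hz ω) (fun z _ => by simp [ha]) hy.1 hy.2
  have hshifted := (hasFDerivAt_comp_add_right a).2
    (h.hasFDerivAt_fderiv_apply hΩ hu hx.self_of_nhds.2 ω)
  have heq := congrArg (fun L : E →L[ℝ] ℝ => L ω)
    (hshifted.unique ((h.hasFDerivAt_fderiv_apply hΩ hu hx.self_of_nhds.1 ω).congr_of_eventuallyEq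
      hinvariant))
  simpa [hω] using heq

theorem fderiv_apply_eq_zero_of_inner_eq_zero (h : SolvesOscPDE ω u Ω) (hΩ : IsOpen Ω)
    (hΩc : Convex ℝ Ω) (hu : ContDiffOn ℝ 2 u Ω) (hω : ω ≠ 0) {e : E} (he : ⟪ω, e⟫ = 0)
    {x : E} (hx : x ∈ Ω) : fderiv ℝ u x e = 0 := by
  have hnear : ∀ᶠ s in 𝓝 (0 : ℝ), ∀ᶠ y in 𝓝 x, y ∈ Ω ∧ y + s • e ∈ Ω := by
    have hcont : Continuous fun p : ℝ × E => (p.2, p.2 + p.1 • e) := by fun_prop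
    have hopen : ∀ᶠ p in 𝓝 ((0 : ℝ), x), p.2 ∈ Ω ∧ p.2 + p.1 • e ∈ Ω :=
      hcont.continuousAt.preimage_mem_nhds ((hΩ.prod hΩ).mem_nhds (by simpa using hx))
    exact hopen.curry_nhds
  have hconst : (fun s : ℝ => u (x + s • e)) =ᶠ[𝓝 0] fun _ => u x :=
    hnear.mono fun s hs =>
      h.apply_add_eq_of_inner_eq_zero hΩ hΩc hu hω (by simp [inner_smul_right, he]) hs
  have hline : HasDerivAt (fun s : ℝ => u (x + s • e)) (fderiv ℝ u x e) 0 := by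
    have := (hu.differentiableOn (by norm_num) |>.differentiableAt (hΩ.mem_nhds hx)).hasFDerivAt
      |>.comp_hasDerivAt_of_eq (0 : ℝ) (((hasDerivAt_id (0 : ℝ)).smul_const e).const_add x)
        (by simp)
    simpa [Function.comp_def] using this
  exact hline.unique ((hasDerivAt_const (0 : ℝ) (u x)).congr_of_eventuallyEq hconst)

theorem hasFDerivAt_smul_innerSL (h : SolvesOscPDE ω u Ω) (hΩ : IsOpen Ω)
    (hΩc : Convex ℝ Ω) (hu : ContDiffOn ℝ 2 u Ω) (hω : ω ≠ 0) {x : E} (hx : x ∈ Ω) :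
    HasFDerivAt u ((⟪ω, ω⟫⁻¹ * fderiv ℝ u x ω) • innerSL ℝ ω) x := by
  refine (hu.differentiableOn (by norm_num) |>.differentiableAt (hΩ.mem_nhds hx)).hasFDerivAt
    |>.congr_fderiv ?_
  ext v
  have hc : ⟪ω, ω⟫ ≠ 0 := inner_self_ne_zero.2 hω
  have hperp := h.fderiv_apply_eq_zero_of_inner_eq_zero hΩ hΩc hu hω
    (e := v - (⟪ω, v⟫ / ⟪ω, ω⟫) • ω) (by rw [inner_sub_right, inner_smul_right]; field_simp; ring)
    hx
  rw [map_sub, map_smul, smul_eq_mul, sub_eq_zero] at hperp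
  simp only [hperp, smul_apply, coe_innerSL_apply, smul_eq_mul]
  field_simp

theorem exists_eq_cos_add_sin (h : SolvesOscPDE ω u Ω) (hΩ : IsOpen Ω) (hΩc : Convex ℝ Ω)
    (hu : ContDiffOn ℝ 2 u Ω) (hω : ω ≠ 0) :
    ∃ C₁ C₂ : ℝ, ∀ x ∈ Ω, u x = C₁ * cos ⟪ω, x⟫ + C₂ * sin ⟪ω, x⟫ :=
  hΩ.exists_eq_cos_add_sin_of_hasFDerivAt hΩc.isPreconnected
    (fun _ _ => (innerSL ℝ ω).hasFDerivAt) (fun _ hx => h.hasFDerivAt_smul_innerSL hΩ hΩc hu hω hx)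
    fun _ hx => by
      refine ((h.hasFDerivAt_fderiv_apply hΩ hu hx ω).const_mul ⟪ω, ω⟫⁻¹).congr_fderiv ?_
      rw [smul_smul]
      congr 1
      field_simp [inner_self_ne_zero.2 hω]

end SolvesOscPDE

end Oscillator

namespace EuclideanSpace

variable {ι : Type*}

theorem isOpen_setOf_forall_mem [Finite ι] {s : ι → Set ℝ} (hs : ∀ k, IsOpen (s k)) :
    IsOpen {x : EuclideanSpace ℝ ι | ∀ k, x k ∈ s k} := by
  simp only [ofPred_forall]
  exact isOpen_iInter_of_finite fun k => (hs k).preimage (proj k).continuous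

theorem convex_setOf_forall_mem {s : ι → Set ℝ} (hs : ∀ k, Convex ℝ (s k)) :
    Convex ℝ {x : EuclideanSpace ℝ ι | ∀ k, x k ∈ s k} := by
  simp only [ofPred_forall]
  exact convex_iInter fun k => (hs k).linear_preimage (proj k).toLinearMap

theorem forall_apply_single_add_eq_zero_iff [Fintype ι] [DecidableEq ι]
    (B : EuclideanSpace ℝ ι →L[ℝ] EuclideanSpace ℝ ι →L[ℝ] ℝ) (ω : EuclideanSpace ℝ ι) (r : ℝ) :
    (∀ i j, B (single i 1) (single j 1) + ω i * ω j * r = 0) ↔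
      ∀ v w, B v w + ⟪ω, v⟫ * ⟪ω, w⟫ * r = 0 := by
  set B' := B + r • (innerSL ℝ ω).smulRight (innerSL ℝ ω)
  have hB' : ∀ v w, B' v w = B v w + ⟪ω, v⟫ * ⟪ω, w⟫ * r := fun v w => by
    simp [B']
    ring
  refine ⟨fun h v w => ?_, fun h i j => by
    simpa [inner_single_right] using h (single i 1) (single j 1)⟩
  have hzero : B' = 0 := by
    let e := (EuclideanSpace.basisFun ι ℝ).toBasis
    refine ContinuousLinearMap.coe_injective (e.ext fun i =>
      ContinuousLinearMap.coe_injective (e.ext fun j => ?_))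
    simpa [hB', e, inner_single_right] using h i j
  rw [← hB', hzero]
  rfl

end EuclideanSpace

theorem osc_pde_kernel_characterization_general {d : ℕ} (a b : Fin d → ℝ)
    (ω : EuclideanSpace ℝ (Fin d)) (hω : ω ≠ 0)
    (u : EuclideanSpace ℝ (Fin d) → ℝ)
    (hu : ContDiffOn ℝ 2 u {x : EuclideanSpace ℝ (Fin d) | ∀ k, x k ∈ Ioo (a k) (b k)}) :
    (∀ x ∈ {x : EuclideanSpace ℝ (Fin d) | ∀ k, x k ∈ Ioo (a k) (b k)}, ∀ i j : Fin d,
        fderiv ℝ (fun y => fderiv ℝ u y (EuclideanSpace.single j (1 : ℝ))) x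
            (EuclideanSpace.single i (1 : ℝ)) + ω i * ω j * u x = 0) ↔
    ∃ C₁ C₂ : ℝ, ∀ x ∈ {x : EuclideanSpace ℝ (Fin d) | ∀ k, x k ∈ Ioo (a k) (b k)},
      u x = C₁ * Real.cos ⟪ω, x⟫ + C₂ * Real.sin ⟪ω, x⟫ := by
  set Ω := {x : EuclideanSpace ℝ (Fin d) | ∀ k, x k ∈ Ioo (a k) (b k)}
  have hΩ : IsOpen Ω := EuclideanSpace.isOpen_setOf_forall_mem fun _ => isOpen_Ioo
  have hΩc : Convex ℝ Ω := EuclideanSpace.convex_setOf_forall_mem fun _ => convex_Ioo _ _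
  have hcoord : (∀ x ∈ Ω, ∀ i j : Fin d,
      fderiv ℝ (fun y => fderiv ℝ u y (EuclideanSpace.single j (1 : ℝ))) x
        (EuclideanSpace.single i (1 : ℝ)) + ω i * ω j * u x = 0) ↔ SolvesOscPDE ω u Ω :=
    forall₂_congr fun x hx => by
      simp only [fderiv_fderiv_apply_const (hu.differentiableAt_fderiv hΩ hx)]
      exact EuclideanSpace.forall_apply_single_add_eq_zero_iff _ ω (u x)
  rw [hcoord]
  exact ⟨fun h => h.exists_eq_cos_add_sin hΩ hΩc hu hω,
    fun ⟨_, _, h⟩ => solvesOscPDE_of_eqOn_cos_add_sin hΩ h⟩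

/-- Let `ω ∈ ℝ^d`, `ω ≠ 0`, and `c = ω ⊗ ω`. A `C²` function `u` on an open hypercube
`Ω = (a₁,b₁) × ⋯ × (a_d,b_d)` satisfies `∂²u/∂xᵢ∂xⱼ + ωᵢ ωⱼ u = 0` on `Ω` for all `i, j`
iff `u x = C₁ cos (ω·x) + C₂ sin (ω·x)` on `Ω` for some constants `C₁, C₂`. -/
theorem osc_pde_kernel_characterization {d : ℕ} (a b : Fin d → ℝ) (hab : ∀ k, a k < b k)
    (ω : EuclideanSpace ℝ (Fin d)) (hω : ω ≠ 0)
    (u : EuclideanSpace ℝ (Fin d) → ℝ)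
    (hu : ContDiffOn ℝ 2 u {x : EuclideanSpace ℝ (Fin d) | ∀ k, x k ∈ Ioo (a k) (b k)}) :
    (∀ x ∈ {x : EuclideanSpace ℝ (Fin d) | ∀ k, x k ∈ Ioo (a k) (b k)}, ∀ i j : Fin d,
        fderiv ℝ (fun y => fderiv ℝ u y (EuclideanSpace.single j (1 : ℝ))) x
            (EuclideanSpace.single i (1 : ℝ)) + ω i * ω j * u x = 0) ↔
    ∃ C₁ C₂ : ℝ, ∀ x ∈ {x : EuclideanSpace ℝ (Fin d) | ∀ k, x k ∈ Ioo (a k) (b k)},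
      u x = C₁ * Real.cos ⟪ω, x⟫ + C₂ * Real.sin ⟪ω, x⟫ :=
  osc_pde_kernel_characterization_general a b ω hω u hu
end

section
/- Let X, Y be Banach spaces with X continuously embedded in Y. Suppose Φ₁, Φ₂ are lower semi-continuous semi-norms on Y, coercive on X, with finite-dimensional kernels, and satisfy cᵢ‖u‖_X ≤ ‖u‖_Y + Φᵢ(u) ≤ Cᵢ‖u‖_X for all u ∈ X (i = 1,2) with 0 < cᵢ < Cᵢ < ∞. Then there exist 0 < c < C < ∞ such that c‖u‖_X ≤ ‖u‖_Y + (Φ₁ □ Φ₂)(u) ≤ C‖u‖_X for all u ∈ X. -/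
/-!
For any `v`, split `u = (P₁ (u - v) + P₂ v) + ((u - v) - P₁ (u - v)) + (v - P₂ v)`.
The first summand lies in the finite-dimensional space `(ker Φ₁ + ker Φ₂) ∩ X`, on which
the `X`-norm is dominated by the `Y`-norm; by coercivity the other two have `X`-norm at most
`C₁' Φ₁ (u - v)` and `C₂' Φ₂ v`. Hence `‖u‖_X ≲ ‖u‖_Y + Φ₁ (u - v) + Φ₂ v`, and the infimum
over `v` gives the lower bound. The upper bound holds because `Φ₁ □ Φ₂ ≤ Φ₁` (take `v = 0`).
-/

open Filter
open scoped ENNReal Pointwise Topology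

/-- A lower semi-continuous semi-norm on a normed space: a proper, positively
one-homogeneous, subadditive, lower semi-continuous functional `Φ : X → [0,∞]`
admitting a linear continuous projection onto its kernel. -/
def IsLscSeminorm {X : Type*} [NormedAddCommGroup X] [NormedSpace ℝ X]
    (Φ : X → ℝ≥0∞) : Prop :=
  (∃ x, Φ x ≠ ⊤) ∧
  (∀ (c : ℝ) (x : X), Φ (c • x) = ENNReal.ofReal |c| * Φ x) ∧
  (∀ x y : X, Φ (x + y) ≤ Φ x + Φ y) ∧
  LowerSemicontinuous Φ ∧
  (∃ P : X →L[ℝ] X, (∀ x, P (P x) = P x) ∧ Set.range P = {x | Φ x = 0})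

/-- `P` is a linear continuous onto projection onto the kernel of `Φ`. -/
def IsKernelProjection {X : Type*} [NormedAddCommGroup X] [NormedSpace ℝ X]
    (Φ : X → ℝ≥0∞) (P : X →L[ℝ] X) : Prop :=
  (∀ x, P (P x) = P x) ∧ Set.range P = {x | Φ x = 0}

/-- `Φ` is coercive: `‖u − Pu‖ ≤ C Φ(u)` for some kernel projection `P` and `C > 0`. -/
def IsCoerciveSeminorm {X : Type*} [NormedAddCommGroup X] [NormedSpace ℝ X]
    (Φ : X → ℝ≥0∞) : Prop :=
  ∃ (P : X →L[ℝ] X) (C : ℝ), 0 < C ∧ IsKernelProjection Φ P ∧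
    ∀ u, ENNReal.ofReal ‖u - P u‖ ≤ ENNReal.ofReal C * Φ u

/-- The kernel of `Φ` is a finite-dimensional subspace. -/
def HasFinDimKernel {X : Type*} [NormedAddCommGroup X] [NormedSpace ℝ X]
    (Φ : X → ℝ≥0∞) : Prop :=
  ∃ V : Submodule ℝ X, (V : Set X) = {x | Φ x = 0} ∧ FiniteDimensional ℝ V

/-- Reflexivity of a Banach space, encoded via weak sequential compactness of bounded
sequences (Eberlein–Šmulian). -/
def IsReflexiveSpace (X : Type*) [NormedAddCommGroup X] [NormedSpace ℝ X] : Prop :=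
  ∀ u : ℕ → X, Bornology.IsBounded (Set.range u) →
    ∃ (φ : ℕ → ℕ) (x : X), StrictMono φ ∧
      ∀ f : X →L[ℝ] ℝ, Tendsto (fun n => f (u (φ n))) atTop (nhds (f x))

/-- The infimal convolution of two `[0,∞]`-valued functionals. -/
noncomputable def InfConv {X : Type*} [NormedAddCommGroup X] [NormedSpace ℝ X]
    (Φ₁ Φ₂ : X → ℝ≥0∞) (u : X) : ℝ≥0∞ :=
  ⨅ v : X, Φ₁ (u - v) + Φ₂ v

theorem ENNReal.exists_pos_ofReal_mul_le_of_le_mul {M : ℝ≥0∞} (hM : M ≠ ⊤) :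
    ∃ c : ℝ, 0 < c ∧ ∀ x y : ℝ≥0∞, x ≤ M * y → ENNReal.ofReal c * x ≤ y := by
  refine ⟨(M.toReal + 1)⁻¹, by positivity, fun x y hxy => ?_⟩
  have hcM : ENNReal.ofReal (M.toReal + 1)⁻¹ * M ≤ 1 := by
    rw [← ENNReal.ofReal_toReal hM, ← ENNReal.ofReal_mul (by positivity),
      ENNReal.toReal_ofReal ENNReal.toReal_nonneg]
    refine ENNReal.ofReal_le_one.2 ?_
    rw [inv_mul_le_iff₀ (by positivity)]
    linarith
  calc ENNReal.ofReal (M.toReal + 1)⁻¹ * x ≤ ENNReal.ofReal (M.toReal + 1)⁻¹ * M * y := by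
        rw [mul_assoc]; gcongr
    _ ≤ 1 * y := by gcongr
    _ = y := one_mul y

section ExtendedSeminorm

variable {E : Type*} [NormedAddCommGroup E] [NormedSpace ℝ E] {p : E → ℝ≥0∞}

theorem map_zero_of_map_smul (hsmul : ∀ (c : ℝ) (x : E), p (c • x) = ENNReal.ofReal |c| * p x) :
    p 0 = 0 := by
  simpa using hsmul 0 0

theorem map_neg_of_map_smul (hsmul : ∀ (c : ℝ) (x : E), p (c • x) = ENNReal.ofReal |c| * p x)
    (x : E) : p (-x) = p x := by
  simpa using hsmul (-1) x

theorem exists_le_mul_norm_of_finiteDimensional [FiniteDimensional ℝ E]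
    (hsmul : ∀ (c : ℝ) (x : E), p (c • x) = ENNReal.ofReal |c| * p x)
    (hadd : ∀ x y : E, p (x + y) ≤ p x + p y) (hfin : ∀ x, p x ≠ ⊤) :
    ∃ K : ℝ, 0 < K ∧ ∀ x, p x ≤ ENNReal.ofReal (K * ‖x‖) := by
  let q : Seminorm ℝ E := Seminorm.of (fun x => (p x).toReal)
    (fun x y => by
      rw [← ENNReal.toReal_add (hfin x) (hfin y)]
      exact ENNReal.toReal_mono (ENNReal.add_ne_top.2 ⟨hfin x, hfin y⟩) (hadd x y))
    (fun c x => by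
      rw [hsmul, ENNReal.toReal_mul, ENNReal.toReal_ofReal (abs_nonneg c), Real.norm_eq_abs])
  -- a seminorm is convex, and convex functions on finite-dimensional spaces are continuous
  have hq : Continuous q := by
    simpa [continuousOn_univ] using q.convexOn.continuousOn_interior
  obtain ⟨K, hK, hbound⟩ := q.bound_of_continuous_normedSpace hq
  refine ⟨K, hK, fun x => ?_⟩
  rw [← ENNReal.ofReal_toReal (hfin x)]
  exact ENNReal.ofReal_le_ofReal (hbound x)

def finiteSubmodule (p : E → ℝ≥0∞)
    (hsmul : ∀ (c : ℝ) (x : E), p (c • x) = ENNReal.ofReal |c| * p x)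
    (hadd : ∀ x y : E, p (x + y) ≤ p x + p y) : Submodule ℝ E where
  carrier := {x | p x ≠ ⊤}
  add_mem' {x y} hx hy := ne_top_of_le_ne_top (ENNReal.add_ne_top.2 ⟨hx, hy⟩) (hadd x y)
  zero_mem' := by simp [map_zero_of_map_smul hsmul]
  smul_mem' c x hx := by simpa [hsmul] using ENNReal.mul_ne_top ENNReal.ofReal_ne_top hx

theorem exists_le_mul_norm_of_mem_finiteDimensional
    (hsmul : ∀ (c : ℝ) (x : E), p (c • x) = ENNReal.ofReal |c| * p x)
    (hadd : ∀ x y : E, p (x + y) ≤ p x + p y) (V : Submodule ℝ E) [FiniteDimensional ℝ V] :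
    ∃ K : ℝ≥0∞, K ≠ ⊤ ∧ ∀ z ∈ V, p z ≠ ⊤ → p z ≤ K * ENNReal.ofReal ‖z‖ := by
  let W := V ⊓ finiteSubmodule p hsmul hadd
  have : FiniteDimensional ℝ W := Submodule.finiteDimensional_of_le inf_le_left
  obtain ⟨K, hK, hbound⟩ := exists_le_mul_norm_of_finiteDimensional (p := fun z : W => p z)
    (fun c z => hsmul c z) (fun y z => hadd y z) (fun z => z.2.2)
  refine ⟨ENNReal.ofReal K, ENNReal.ofReal_ne_top, fun z hz hfin => ?_⟩
  rw [← ENNReal.ofReal_mul hK.le]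
  exact hbound ⟨z, hz, hfin⟩

theorem le_mul_norm_add_of_eq_add
    (hsmul : ∀ (c : ℝ) (x : E), p (c • x) = ENNReal.ofReal |c| * p x)
    (hadd : ∀ x y : E, p (x + y) ≤ p x + p y) {k K : ℝ≥0∞}
    (hemb : ∀ x, ENNReal.ofReal ‖x‖ ≤ k * p x) {V : Set E}
    (hV : ∀ z ∈ V, p z ≠ ⊤ → p z ≤ K * ENNReal.ofReal ‖z‖)
    {u z w : E} (hz : z ∈ V) (hu : p u ≠ ⊤) (huzw : u = z + w) :
    p u ≤ K * (ENNReal.ofReal ‖u‖ + k * p w) + p w := by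
  by_cases hw : p w = ⊤
  · simp [hw]
  have hzuw : z = u + -w := by rw [huzw]; abel
  have hpz : p z ≠ ⊤ := by
    refine ne_top_of_le_ne_top (ENNReal.add_ne_top.2 ⟨hu, hw⟩) ?_
    simpa only [hzuw, map_neg_of_map_smul hsmul] using hadd u (-w)
  have hnz : ENNReal.ofReal ‖z‖ ≤ ENNReal.ofReal ‖u‖ + k * p w :=
    calc ENNReal.ofReal ‖z‖ ≤ ENNReal.ofReal (‖u‖ + ‖w‖) := by
          gcongr; simpa only [hzuw, norm_neg] using norm_add_le u (-w)
      _ ≤ ENNReal.ofReal ‖u‖ + ENNReal.ofReal ‖w‖ := ENNReal.ofReal_add_le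
      _ ≤ ENNReal.ofReal ‖u‖ + k * p w := by gcongr; exact hemb w
  calc p u ≤ p z + p w := huzw ▸ hadd z w
    _ ≤ K * (ENNReal.ofReal ‖u‖ + k * p w) + p w := by
        gcongr; exact (hV z hz hpz).trans (by gcongr)

theorem IsKernelProjection.apply_mem
    {Φ : E → ℝ≥0∞} {P : E →L[ℝ] E} (hP : IsKernelProjection Φ P) {V : Submodule ℝ E}
    (hV : (V : Set E) = {x | Φ x = 0}) (x : E) : P x ∈ V := by
  rw [← SetLike.mem_coe, hV, ← hP.2]
  exact ⟨x, rfl⟩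

theorem HasFinDimKernel.map_zero
    {Φ : E → ℝ≥0∞} (hΦ : HasFinDimKernel Φ) : Φ 0 = 0 := by
  obtain ⟨V, hV, -⟩ := hΦ
  have h0 : (0 : E) ∈ (V : Set E) := V.zero_mem
  rwa [hV] at h0

theorem infConv_le_left
    {Φ₁ Φ₂ : E → ℝ≥0∞} (h : Φ₂ 0 = 0) (u : E) : InfConv Φ₁ Φ₂ u ≤ Φ₁ u :=
  (iInf_le _ 0).trans (by rw [sub_zero, h, add_zero])

theorem exists_le_mul_norm_add_infConv
    (hsmul : ∀ (c : ℝ) (x : E), p (c • x) = ENNReal.ofReal |c| * p x)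
    (hadd : ∀ x y : E, p (x + y) ≤ p x + p y) {k : ℝ}
    (hemb : ∀ x, ENNReal.ofReal ‖x‖ ≤ ENNReal.ofReal k * p x)
    {Φ₁ Φ₂ : E → ℝ≥0∞} (hk₁ : HasFinDimKernel Φ₁) (hk₂ : HasFinDimKernel Φ₂)
    {P₁ P₂ : E →L[ℝ] E} (hP₁ : IsKernelProjection Φ₁ P₁) (hP₂ : IsKernelProjection Φ₂ P₂)
    {C₁ C₂ : ℝ} (hcoer₁ : ∀ u, p (u - P₁ u) ≤ ENNReal.ofReal C₁ * Φ₁ u)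
    (hcoer₂ : ∀ u, p (u - P₂ u) ≤ ENNReal.ofReal C₂ * Φ₂ u) :
    ∃ M : ℝ≥0∞, M ≠ ⊤ ∧
      ∀ u, p u ≠ ⊤ → p u ≤ M * (ENNReal.ofReal ‖u‖ + InfConv Φ₁ Φ₂ u) := by
  obtain ⟨V₁, hV₁, _⟩ := hk₁
  obtain ⟨V₂, hV₂, _⟩ := hk₂
  obtain ⟨K, hK, hbound⟩ := exists_le_mul_norm_of_mem_finiteDimensional hsmul hadd (V₁ ⊔ V₂)
  set M := K * (1 + ENNReal.ofReal k * (ENNReal.ofReal C₁ + ENNReal.ofReal C₂)) +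
    (ENNReal.ofReal C₁ + ENNReal.ofReal C₂)
  have hM : M ≠ ⊤ := by finiteness
  refine ⟨M, hM, fun u hu => ?_⟩
  rw [InfConv, ENNReal.add_iInf, ENNReal.mul_iInf fun h => absurd h hM]
  refine le_iInf fun v => ?_
  set S := ENNReal.ofReal ‖u‖ + (Φ₁ (u - v) + Φ₂ v)
  set w := (u - v - P₁ (u - v)) + (v - P₂ v)
  have hz : P₁ (u - v) + P₂ v ∈ V₁ ⊔ V₂ :=
    Submodule.add_mem_sup (hP₁.apply_mem hV₁ _) (hP₂.apply_mem hV₂ _)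
  have hw : p w ≤ (ENNReal.ofReal C₁ + ENNReal.ofReal C₂) * S := by
    calc p w ≤ ENNReal.ofReal C₁ * Φ₁ (u - v) + ENNReal.ofReal C₂ * Φ₂ v :=
          (hadd _ _).trans (add_le_add (hcoer₁ _) (hcoer₂ _))
      _ ≤ ENNReal.ofReal C₁ * S + ENNReal.ofReal C₂ * S := by
          gcongr
          · exact le_add_left le_self_add
          · exact le_add_left le_add_self
      _ = _ := (add_mul _ _ _).symm
  calc p u ≤ K * (ENNReal.ofReal ‖u‖ + ENNReal.ofReal k * p w) + p w :=
        le_mul_norm_add_of_eq_add hsmul hadd hemb hbound hz hu (by simp only [w]; abel)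
    _ ≤ K * (S + ENNReal.ofReal k * ((ENNReal.ofReal C₁ + ENNReal.ofReal C₂) * S))
          + (ENNReal.ofReal C₁ + ENNReal.ofReal C₂) * S := by
        gcongr; exact le_self_add
    _ = M * S := by ring

end ExtendedSeminorm

theorem infconv_norm_equivalence_general {Y : Type*}
    [NormedAddCommGroup Y] [NormedSpace ℝ Y]
    (NX : Y → ℝ≥0∞)
    -- `NX` is an extended norm on `Y`, defining the subspace `X = {NX ≠ ∞}`
    (hNXsmul : ∀ (c : ℝ) (y : Y), NX (c • y) = ENNReal.ofReal |c| * NX y)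
    (hNXadd : ∀ y z : Y, NX (y + z) ≤ NX y + NX z)
    -- `X` is continuously embedded in `Y`
    (hemb : ∃ k : ℝ, 0 < k ∧ ∀ y : Y, ENNReal.ofReal ‖y‖ ≤ ENNReal.ofReal k * NX y)
    (Φ₁ Φ₂ : Y → ℝ≥0∞)
    (hk₁ : HasFinDimKernel Φ₁) (hk₂ : HasFinDimKernel Φ₂)
    -- coercivity on `X`
    (hc₁ : ∃ (P₁ : Y →L[ℝ] Y) (C₁' : ℝ), 0 < C₁' ∧ IsKernelProjection Φ₁ P₁ ∧
      ∀ u : Y, NX (u - P₁ u) ≤ ENNReal.ofReal C₁' * Φ₁ u)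
    (hc₂ : ∃ (P₂ : Y →L[ℝ] Y) (C₂' : ℝ), 0 < C₂' ∧ IsKernelProjection Φ₂ P₂ ∧
      ∀ u : Y, NX (u - P₂ u) ≤ ENNReal.ofReal C₂' * Φ₂ u)
    -- two-sided norm equivalence for `Φ₁` and `Φ₂`
    (c₁ C₁ : ℝ)
    (heq₁ : ∀ u : Y, NX u ≠ ⊤ →
      ENNReal.ofReal c₁ * NX u ≤ ENNReal.ofReal ‖u‖ + Φ₁ u ∧
        ENNReal.ofReal ‖u‖ + Φ₁ u ≤ ENNReal.ofReal C₁ * NX u) :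
    ∃ c C : ℝ, 0 < c ∧ c < C ∧ ∀ u : Y, NX u ≠ ⊤ →
      ENNReal.ofReal c * NX u ≤ ENNReal.ofReal ‖u‖ + InfConv Φ₁ Φ₂ u ∧
        ENNReal.ofReal ‖u‖ + InfConv Φ₁ Φ₂ u ≤ ENNReal.ofReal C * NX u := by
  obtain ⟨k, -, hemb⟩ := hemb
  obtain ⟨P₁, C₁', -, hP₁, hcoer₁⟩ := hc₁
  obtain ⟨P₂, C₂', -, hP₂, hcoer₂⟩ := hc₂
  obtain ⟨M, hM, hlower⟩ :=
    exists_le_mul_norm_add_infConv hNXsmul hNXadd hemb hk₁ hk₂ hP₁ hP₂ hcoer₁ hcoer₂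
  obtain ⟨c, hc, hscale⟩ := ENNReal.exists_pos_ofReal_mul_le_of_le_mul hM
  refine ⟨c, max C₁ (c + 1), hc, (lt_add_one c).trans_le (le_max_right _ _),
    fun u hu => ⟨hscale _ _ (hlower u hu), ?_⟩⟩
  calc ENNReal.ofReal ‖u‖ + InfConv Φ₁ Φ₂ u ≤ ENNReal.ofReal ‖u‖ + Φ₁ u := by
        gcongr; exact infConv_le_left hk₂.map_zero u
    _ ≤ ENNReal.ofReal C₁ * NX u := (heq₁ u hu).2
    _ ≤ ENNReal.ofReal (max C₁ (c + 1)) * NX u := by gcongr; exact le_max_left _ _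

/-- Norm equivalence for the infimal convolution: let `Y` be a Banach space and let
`NX : Y → [0,∞]` be the extended norm of a Banach space `X = {NX ≠ ∞}` continuously
embedded in `Y`. If `Φ₁, Φ₂` are lower semi-continuous semi-norms on `Y`, coercive on `X`,
with finite-dimensional kernels, satisfying `cᵢ ‖u‖_X ≤ ‖u‖_Y + Φᵢ(u) ≤ Cᵢ ‖u‖_X` on `X`,
then `c ‖u‖_X ≤ ‖u‖_Y + (Φ₁ □ Φ₂)(u) ≤ C ‖u‖_X` on `X` for some `0 < c < C`. -/
theorem infconv_norm_equivalence {Y : Type*}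
    [NormedAddCommGroup Y] [NormedSpace ℝ Y] [CompleteSpace Y]
    (NX : Y → ℝ≥0∞)
    -- `NX` is an extended norm on `Y`, defining the subspace `X = {NX ≠ ∞}`
    (hNXsmul : ∀ (c : ℝ) (y : Y), NX (c • y) = ENNReal.ofReal |c| * NX y)
    (hNXadd : ∀ y z : Y, NX (y + z) ≤ NX y + NX z)
    (hNXdefinite : ∀ y : Y, NX y = 0 → y = 0)
    -- `X` is complete (a Banach space)
    (hNXcomplete : ∀ u : ℕ → Y, (∀ n, NX (u n) ≠ ⊤) →
      (∀ ε : ℝ, 0 < ε → ∃ N, ∀ p q, N ≤ p → N ≤ q → NX (u p - u q) < ENNReal.ofReal ε) →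
      ∃ y : Y, NX y ≠ ⊤ ∧ Tendsto (fun n => NX (u n - y)) atTop (nhds 0))
    -- `X` is continuously embedded in `Y`
    (hemb : ∃ k : ℝ, 0 < k ∧ ∀ y : Y, ENNReal.ofReal ‖y‖ ≤ ENNReal.ofReal k * NX y)
    (Φ₁ Φ₂ : Y → ℝ≥0∞) (h₁ : IsLscSeminorm Φ₁) (h₂ : IsLscSeminorm Φ₂)
    (hk₁ : HasFinDimKernel Φ₁) (hk₂ : HasFinDimKernel Φ₂)
    -- coercivity on `X`
    (hc₁ : ∃ (P₁ : Y →L[ℝ] Y) (C₁' : ℝ), 0 < C₁' ∧ IsKernelProjection Φ₁ P₁ ∧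
      ∀ u : Y, NX (u - P₁ u) ≤ ENNReal.ofReal C₁' * Φ₁ u)
    (hc₂ : ∃ (P₂ : Y →L[ℝ] Y) (C₂' : ℝ), 0 < C₂' ∧ IsKernelProjection Φ₂ P₂ ∧
      ∀ u : Y, NX (u - P₂ u) ≤ ENNReal.ofReal C₂' * Φ₂ u)
    -- two-sided norm equivalence for `Φ₁` and `Φ₂`
    (c₁ C₁ c₂ C₂ : ℝ) (hcC₁ : 0 < c₁ ∧ c₁ < C₁) (hcC₂ : 0 < c₂ ∧ c₂ < C₂)
    (heq₁ : ∀ u : Y, NX u ≠ ⊤ →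
      ENNReal.ofReal c₁ * NX u ≤ ENNReal.ofReal ‖u‖ + Φ₁ u ∧
        ENNReal.ofReal ‖u‖ + Φ₁ u ≤ ENNReal.ofReal C₁ * NX u)
    (heq₂ : ∀ u : Y, NX u ≠ ⊤ →
      ENNReal.ofReal c₂ * NX u ≤ ENNReal.ofReal ‖u‖ + Φ₂ u ∧
        ENNReal.ofReal ‖u‖ + Φ₂ u ≤ ENNReal.ofReal C₂ * NX u) :
    ∃ c C : ℝ, 0 < c ∧ c < C ∧ ∀ u : Y, NX u ≠ ⊤ →
      ENNReal.ofReal c * NX u ≤ ENNReal.ofReal ‖u‖ + InfConv Φ₁ Φ₂ u ∧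
        ENNReal.ofReal ‖u‖ + InfConv Φ₁ Φ₂ u ≤ ENNReal.ofReal C * NX u :=
  infconv_norm_equivalence_general NX hNXsmul hNXadd hemb Φ₁ Φ₂ hk₁ hk₂ hc₁ hc₂ c₁ C₁ heq₁
end

section
/- Existence for regularized linear inverse problems: let X, Y be Banach spaces with X reflexive, K : X → Y linear continuous, F : Y → (−∞,∞] convex, lower semi-continuous, coercive and bounded from below, and Φ a lower semi-continuous, coercive semi-norm on X with finite-dimensional kernel. Then the problem min_{u ∈ X} F(Ku) + Φ(u) admits a solution. -/
open Filter
open scoped ENNReal Pointwise Topology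

/-!
Direct method. Take a minimizing sequence `uₙ` of `J u = F (K u) + Φ u`. Coercivity of `F`
bounds `K uₙ`, coercivity of `Φ` bounds `uₙ - P uₙ`; the remaining component `P uₙ` lies in the
finite-dimensional space `ker Φ`, on which `K` is bounded below modulo `Z = ker Φ ∩ ker K`.
Subtracting from `uₙ` a suitable element of `Z` changes neither `K uₙ` nor `Φ uₙ` and makes the
sequence bounded, so by reflexivity a subsequence converges weakly. Since `J` is convex and lower
semi-continuous, its sublevel sets are closed and convex, hence weakly closed, and the weak limit
is a minimizer.
-/

section WeakConvergence

variable {E : Type*} [NormedAddCommGroup E] [NormedSpace ℝ E]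

def TendstoWeakly (u : ℕ → E) (x : E) : Prop :=
  ∀ f : E →L[ℝ] ℝ, Tendsto (fun n => f (u n)) atTop (𝓝 (f x))

/-- Mazur: closed convex sets are weakly sequentially closed, by Hahn–Banach separation. -/
lemma TendstoWeakly.mem_of_frequently {s : Set E} (hconv : Convex ℝ s) (hclosed : IsClosed s)
    {u : ℕ → E} {x : E} (hu : TendstoWeakly u x) (hs : ∃ᶠ n in atTop, u n ∈ s) : x ∈ s := by
  by_contra hx
  obtain ⟨f, r, hfs, hrx⟩ := geometric_hahn_banach_closed_point hconv hclosed hx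
  obtain ⟨n, hns, hrn⟩ := (hs.and_eventually ((hu f).eventually (eventually_gt_nhds hrx))).exists
  exact (hfs _ hns).not_gt hrn

end WeakConvergence

section ERealConvex

variable {E : Type*} [AddCommGroup E] [Module ℝ E]

def ERealConvex (f : E → EReal) : Prop :=
  ∀ (y z : E) (t : ℝ), 0 ≤ t → t ≤ 1 →
    f (t • y + (1 - t) • z) ≤ (t : EReal) * f y + ((1 - t : ℝ) : EReal) * f z

lemma ERealConvex.convex_sublevel {f : E → EReal} (hf : ERealConvex f) (c : ℝ) :
    Convex ℝ {y | f y ≤ c} := by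
  intro y hy z hz a b ha hb hab
  obtain rfl : b = 1 - a := by linarith
  calc f (a • y + (1 - a) • z) ≤ (a : EReal) * f y + ((1 - a : ℝ) : EReal) * f z :=
        hf y z a ha (by linarith)
    _ ≤ (a : EReal) * c + ((1 - a : ℝ) : EReal) * c := by gcongr; exacts [hy, hz]
    _ = c := by norm_cast; ring

lemma ERealConvex.comp_linearMap {F : Type*} [AddCommGroup F] [Module ℝ F] {f : F → EReal}
    (hf : ERealConvex f) (K : E →ₗ[ℝ] F) : ERealConvex (fun u => f (K u)) := by
  intro y z t ht0 ht1
  simpa only [map_add, map_smul] using hf (K y) (K z) t ht0 ht1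

lemma ERealConvex.add {f g : E → EReal} (hf : ERealConvex f) (hg : ERealConvex g) :
    ERealConvex (fun u => f u + g u) := by
  intro y z t ht0 ht1
  have hdistrib : ∀ s : ℝ, 0 ≤ s → ∀ a b : EReal, (s : EReal) * (a + b) = s * a + s * b :=
    fun s hs => EReal.left_distrib_of_nonneg_of_ne_top (by exact_mod_cast hs) (EReal.coe_ne_top s)
  calc f (t • y + (1 - t) • z) + g (t • y + (1 - t) • z)
      ≤ ((t : EReal) * f y + ((1 - t : ℝ) : EReal) * f z) +
          ((t : EReal) * g y + ((1 - t : ℝ) : EReal) * g z) :=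
        add_le_add (hf y z t ht0 ht1) (hg y z t ht0 ht1)
    _ = (t : EReal) * (f y + g y) + ((1 - t : ℝ) : EReal) * (f z + g z) := by
        rw [hdistrib t ht0, hdistrib (1 - t) (by linarith), add_add_add_comm]

lemma ERealConvex.coe_ennreal {Φ : E → ℝ≥0∞}
    (hhom : ∀ (c : ℝ) (x : E), Φ (c • x) = ENNReal.ofReal |c| * Φ x)
    (hadd : ∀ x y : E, Φ (x + y) ≤ Φ x + Φ y) : ERealConvex (fun u => (Φ u : EReal)) := by
  intro y z t ht0 ht1
  have hcoe : ∀ s : ℝ, 0 ≤ s → ∀ x, ((Φ (s • x) : ℝ≥0∞) : EReal) = (s : EReal) * Φ x := by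
    intro s hs x
    rw [hhom, abs_of_nonneg hs, EReal.coe_ennreal_mul, EReal.coe_ennreal_ofReal, max_eq_left hs]
  calc ((Φ (t • y + (1 - t) • z) : ℝ≥0∞) : EReal)
      ≤ ((Φ (t • y) + Φ ((1 - t) • z) : ℝ≥0∞) : EReal) :=
        EReal.coe_ennreal_le_coe_ennreal_iff.2 (hadd _ _)
    _ = (t : EReal) * Φ y + ((1 - t : ℝ) : EReal) * Φ z := by
        rw [EReal.coe_ennreal_add, hcoe t ht0, hcoe (1 - t) (by linarith)]

end ERealConvex

lemma TendstoWeakly.le_liminf {E : Type*} [NormedAddCommGroup E] [NormedSpace ℝ E]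
    {f : E → EReal} (hf : ERealConvex f) (hlsc : LowerSemicontinuous f) {u : ℕ → E} {x : E}
    (hu : TendstoWeakly u x) : f x ≤ liminf (fun n => f (u n)) atTop := by
  refine EReal.le_of_forall_lt_iff_le.1 fun c hc => ?_
  exact hu.mem_of_frequently (hf.convex_sublevel c) (hlsc.isClosed_preimage c)
    ((frequently_lt_of_liminf_lt (by isBoundedDefault) hc).mono fun n hn => hn.le)

lemma exists_forall_le_of_minimizing_seq {α : Type*} [Nonempty α] {J : α → EReal}
    (hJ : ∀ (c : ℝ) (u : ℕ → α), (∀ n, J (u n) ≤ c) →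
      Tendsto (fun n => J (u n)) atTop (𝓝 (⨅ y, J y)) → ∃ x, J x ≤ ⨅ y, J y) :
    ∃ x, ∀ y, J x ≤ J y := by
  suffices ∃ x, J x ≤ ⨅ y, J y from this.imp fun x hx y => hx.trans (iInf_le J y)
  rcases (le_top : ⨅ y, J y ≤ ⊤).eq_or_lt with htop | hlt
  · exact ⟨Classical.arbitrary α, htop ▸ le_top⟩
  obtain ⟨c, hμc, -⟩ := EReal.lt_iff_exists_real_btwn.1 hlt
  obtain ⟨b, -, hb, hbμ⟩ := exists_seq_strictAnti_tendsto' hμc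
  choose u hu using fun n => iInf_lt_iff.1 (hb n).1
  refine hJ c u (fun n => ((hu n).trans (hb n).2).le) ?_
  exact tendsto_of_tendsto_of_tendsto_of_le_of_le tendsto_const_nhds hbμ
    (fun n => iInf_le J (u n)) (fun n => (hu n).le)

lemma IsReflexiveSpace.exists_forall_le {X : Type*} [NormedAddCommGroup X] [NormedSpace ℝ X]
    (hrefl : IsReflexiveSpace X) {J : X → EReal} (hconv : ERealConvex J)
    (hlsc : LowerSemicontinuous J)
    (hbdd : ∀ c : ℝ, ∃ M, ∀ u, J u ≤ c → ∃ v, J v ≤ J u ∧ ‖v‖ ≤ M) :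
    ∃ x, ∀ y, J x ≤ J y := by
  refine exists_forall_le_of_minimizing_seq fun c u hu hlim => ?_
  obtain ⟨M, hM⟩ := hbdd c
  choose v hvJ hvM using fun n => hM (u n) (hu n)
  obtain ⟨φ, x, hφ, hx⟩ := hrefl v
    (isBounded_iff_forall_norm_le.2 ⟨M, Set.forall_mem_range.2 hvM⟩)
  refine ⟨x, ?_⟩
  calc J x ≤ liminf (fun n => J (v (φ n))) atTop := TendstoWeakly.le_liminf hconv hlsc hx
    _ ≤ liminf (fun n => J (u (φ n))) atTop := liminf_le_liminf (.of_forall fun n => hvJ _)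
    _ = ⨅ y, J y := (hlim.comp hφ.tendsto_atTop).liminf_eq

section KernelDecomposition

variable {X Y : Type*} [NormedAddCommGroup X] [NormedSpace ℝ X]
  [NormedAddCommGroup Y] [NormedSpace ℝ Y]

/-- On a complement of `V ∩ ker K` in `V`, the map `K` is injective, hence bounded below by
finite-dimensionality. -/
lemma Submodule.exists_norm_sub_le_of_mem_ker (V : Submodule ℝ X) [FiniteDimensional ℝ V]
    (K : X →ₗ[ℝ] Y) : ∃ c : ℝ, 0 ≤ c ∧ ∀ p ∈ V, ∃ z ∈ V, K z = 0 ∧ ‖p - z‖ ≤ c * ‖K p‖ := by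
  set KV := K ∘ₗ V.subtype
  obtain ⟨W, hW⟩ := Submodule.exists_isCompl (LinearMap.ker KV)
  have hinj : LinearMap.ker (KV.domRestrict W) = ⊥ :=
    LinearMap.ker_eq_bot.2 (LinearMap.injective_domRestrict_iff.2 hW.symm.disjoint)
  obtain ⟨c, -, hc⟩ := (KV.domRestrict W).exists_antilipschitzWith hinj
  refine ⟨c, c.2, fun p hp => ?_⟩
  obtain ⟨z, hz, w, hw, hzw⟩ :=
    Submodule.mem_sup.1 (hW.sup_eq_top ▸ Submodule.mem_top : ⟨p, hp⟩ ∈ _)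
  have hKz : K z = 0 := LinearMap.mem_ker.1 hz
  have hpz : p - z = (w : X) := by
    rw [sub_eq_iff_eq_add', ← Submodule.coe_add, hzw]
  refine ⟨z, z.2, hKz, ?_⟩
  calc ‖p - z‖ = ‖(⟨w, hw⟩ : W)‖ := by rw [hpz]; rfl
    _ ≤ c * ‖KV.domRestrict W ⟨w, hw⟩‖ := ZeroHomClass.bound_of_antilipschitz _ hc _
    _ = c * ‖K p‖ := by simp [KV, ← hpz, hKz]

lemma Submodule.exists_norm_sub_le_of_range_le (V : Submodule ℝ X) [FiniteDimensional ℝ V]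
    (P : X →L[ℝ] X) (hPV : ∀ u, P u ∈ V) (K : X →L[ℝ] Y) :
    ∃ c : ℝ, 0 ≤ c ∧ ∀ u, ∃ z ∈ V, K z = 0 ∧ ‖u - z‖ ≤ c * (‖u - P u‖ + ‖K u‖) := by
  obtain ⟨c, hc, hV⟩ := V.exists_norm_sub_le_of_mem_ker (K : X →ₗ[ℝ] Y)
  refine ⟨1 + c * ‖K‖ + c, by positivity, fun u => ?_⟩
  obtain ⟨z, hzV, hKz, hz⟩ := hV (P u) (hPV u)
  have hKP : ‖K (P u)‖ ≤ ‖K u‖ + ‖K‖ * ‖u - P u‖ := by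
    calc ‖K (P u)‖ = ‖K u - K (u - P u)‖ := by rw [map_sub, sub_sub_cancel]
      _ ≤ ‖K u‖ + ‖K (u - P u)‖ := norm_sub_le _ _
      _ ≤ ‖K u‖ + ‖K‖ * ‖u - P u‖ := by gcongr; exact K.le_opNorm _
  refine ⟨z, hzV, hKz, ?_⟩
  calc ‖u - z‖ ≤ ‖u - P u‖ + ‖P u - z‖ := norm_sub_le_norm_sub_add_norm_sub _ _ _
    _ ≤ ‖u - P u‖ + c * (‖K u‖ + ‖K‖ * ‖u - P u‖) := by
        gcongr; exact hz.trans (by gcongr; exact hKP)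
    _ ≤ (1 + c * ‖K‖ + c) * (‖u - P u‖ + ‖K u‖) := by
        nlinarith [norm_nonneg (u - P u), norm_nonneg (K u), norm_nonneg K,
          mul_nonneg hc (norm_nonneg K)]

end KernelDecomposition

lemma le_mul_sub_of_ofReal_le_mul {r C m c : ℝ} {t : ℝ≥0∞} {a : EReal} (hC : 0 ≤ C)
    (hr : ENNReal.ofReal r ≤ ENNReal.ofReal C * t) (ha : (m : EReal) ≤ a) (hat : a + t ≤ c) :
    r ≤ C * (c - m) := by
  have hmt : (m : EReal) + t ≤ c := (add_le_add_left ha _).trans hat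
  have hmc : m ≤ c := by
    exact_mod_cast (le_add_of_nonneg_right (EReal.coe_ennreal_nonneg t)).trans hmt
  have ht : t ≤ ENNReal.ofReal (c - m) := by
    rw [← EReal.coe_ennreal_le_coe_ennreal_iff, EReal.coe_ennreal_ofReal,
      max_eq_left (by linarith), EReal.coe_sub]
    exact (EReal.le_sub_iff_add_le (.inl (EReal.coe_ne_bot m)) (.inl (EReal.coe_ne_top m))).2
      (add_comm (m : EReal) t ▸ hmt)
  rw [← ENNReal.ofReal_le_ofReal_iff (by nlinarith), ENNReal.ofReal_mul hC]
  exact hr.trans (by gcongr)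

lemma apply_sub_le_of_apply_eq_zero {E : Type*} [AddCommGroup E] [Module ℝ E] {Φ : E → ℝ≥0∞}
    (hhom : ∀ (c : ℝ) (x : E), Φ (c • x) = ENNReal.ofReal |c| * Φ x)
    (hadd : ∀ x y : E, Φ (x + y) ≤ Φ x + Φ y) (u : E) {z : E} (hz : Φ z = 0) :
    Φ (u - z) ≤ Φ u := by
  have hneg : Φ (-z) = 0 := by rw [← neg_one_smul ℝ z, hhom, hz, mul_zero]
  simpa [sub_eq_add_neg, hneg] using hadd u (-z)

lemma LowerSemicontinuous.add_coe_ennreal {E : Type*} [TopologicalSpace E] {f : E → EReal}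
    {g : E → ℝ≥0∞} (hf : LowerSemicontinuous f) (hg : LowerSemicontinuous g)
    (hf_ne_bot : ∀ x, f x ≠ ⊥) : LowerSemicontinuous fun x => f x + (g x : EReal) :=
  hf.add' (continuous_coe_ennreal_ereal.comp_lowerSemicontinuous hg
      fun _ _ => EReal.coe_ennreal_le_coe_ennreal_iff.2)
    fun x => EReal.continuousAt_add (.inr (EReal.coe_ennreal_ne_bot _)) (.inl (hf_ne_bot x))

theorem tikhonov_existence_general {X Y : Type*}
    [NormedAddCommGroup X] [NormedSpace ℝ X]
    [NormedAddCommGroup Y] [NormedSpace ℝ Y]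
    (hrefl : IsReflexiveSpace X)
    (K : X →L[ℝ] Y) (F : Y → EReal)
    (hFconv : ∀ (y z : Y) (t : ℝ), 0 ≤ t → t ≤ 1 →
      F (t • y + (1 - t) • z) ≤ (t : EReal) * F y + ((1 - t : ℝ) : EReal) * F z)
    (hFlsc : LowerSemicontinuous F)
    (hFcoercive : ∀ C : ℝ, ∃ R : ℝ, ∀ y : Y, F y ≤ (C : EReal) → ‖y‖ ≤ R)
    (hFbdd : ∃ m : ℝ, ∀ y : Y, (m : EReal) ≤ F y)
    (Φ : X → ℝ≥0∞) (hΦ : IsLscSeminorm Φ) (hΦc : IsCoerciveSeminorm Φ)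
    (hΦk : HasFinDimKernel Φ) :
    ∃ ustar : X, ∀ u : X, F (K ustar) + (Φ ustar : EReal) ≤ F (K u) + (Φ u : EReal) := by
  obtain ⟨-, hhom, hadd, hΦlsc, -⟩ := hΦ
  obtain ⟨P, C, hC, ⟨-, hPrange⟩, hcoer⟩ := hΦc
  obtain ⟨V, hV, hVfin⟩ := hΦk
  obtain ⟨m, hm⟩ := hFbdd
  have hPV : ∀ u, P u ∈ V := fun u => (Set.ext_iff.1 (hPrange.trans hV.symm) (P u)).1 ⟨u, rfl⟩
  obtain ⟨c₀, hc₀, hdecomp⟩ := V.exists_norm_sub_le_of_range_le P hPV K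
  have hlsc : LowerSemicontinuous fun u => F (K u) + (Φ u : EReal) :=
    (hFlsc.comp K.continuous).add_coe_ennreal hΦlsc
      fun u => ne_bot_of_le_ne_bot (EReal.coe_ne_bot m) (hm _)
  have hconv : ERealConvex fun u => F (K u) + (Φ u : EReal) :=
    (ERealConvex.comp_linearMap hFconv (K : X →ₗ[ℝ] Y)).add (.coe_ennreal hhom hadd)
  refine hrefl.exists_forall_le hconv hlsc fun c => ?_
  obtain ⟨R, hR⟩ := hFcoercive c
  refine ⟨c₀ * (C * (c - m) + R), fun u hu => ?_⟩
  obtain ⟨z, hzV, hKz, hz⟩ := hdecomp u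
  have hΦz : Φ z = 0 := (Set.ext_iff.1 hV z).1 hzV
  refine ⟨u - z, ?_, ?_⟩
  · rw [map_sub, hKz, sub_zero]
    gcongr
    exact EReal.coe_ennreal_le_coe_ennreal_iff.2 (apply_sub_le_of_apply_eq_zero hhom hadd u hΦz)
  · calc ‖u - z‖ ≤ c₀ * (‖u - P u‖ + ‖K u‖) := hz
      _ ≤ c₀ * (C * (c - m) + R) := by
        gcongr
        · exact le_mul_sub_of_ofReal_le_mul hC.le (hcoer u) (hm _) hu
        · exact hR _ ((le_add_of_nonneg_right (EReal.coe_ennreal_nonneg _)).trans hu)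

/-- Existence for regularized linear inverse problems: for `X` a reflexive Banach space,
`Y` a Banach space, `K : X → Y` linear continuous, `F : Y → (−∞,∞]` convex, lower
semi-continuous, coercive and bounded from below, and `Φ` a lower semi-continuous,
coercive semi-norm on `X` with finite-dimensional kernel, the problem
`min_{u ∈ X} F(Ku) + Φ(u)` admits a solution. -/
theorem tikhonov_existence {X Y : Type*}
    [NormedAddCommGroup X] [NormedSpace ℝ X] [CompleteSpace X]
    [NormedAddCommGroup Y] [NormedSpace ℝ Y] [CompleteSpace Y]
    (hrefl : IsReflexiveSpace X)
    (K : X →L[ℝ] Y) (F : Y → EReal)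
    (hFconv : ∀ (y z : Y) (t : ℝ), 0 ≤ t → t ≤ 1 →
      F (t • y + (1 - t) • z) ≤ (t : EReal) * F y + ((1 - t : ℝ) : EReal) * F z)
    (hFlsc : LowerSemicontinuous F)
    (hFcoercive : ∀ C : ℝ, ∃ R : ℝ, ∀ y : Y, F y ≤ (C : EReal) → ‖y‖ ≤ R)
    (hFbdd : ∃ m : ℝ, ∀ y : Y, (m : EReal) ≤ F y)
    (Φ : X → ℝ≥0∞) (hΦ : IsLscSeminorm Φ) (hΦc : IsCoerciveSeminorm Φ)
    (hΦk : HasFinDimKernel Φ) :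
    ∃ ustar : X, ∀ u : X, F (K ustar) + (Φ ustar : EReal) ≤ F (K u) + (Φ u : EReal) :=
  tikhonov_existence_general hrefl K F hFconv hFlsc hFcoercive hFbdd Φ hΦ hΦc hΦk
end

section
/- Discrete kernel characterization: let ω = (ω₁, ω₂) ∈ ℝ² ∖ πℤ², and let c be the symmetric 2×2 matrix with c₁₁ = 2 − 2cos(ω₁), c₂₂ = 2 − 2cos(ω₂), and c₁₂ = c₂₁ = 1 + cos(ω₁ − ω₂) − cos(ω₁) − cos(ω₂). Then u : ℤ² → ℝ satisfies the three finite-difference equations u_{i+1,j} − 2u_{i,j} + u_{i−1,j} + c₁₁u_{i,j} = 0, u_{i,j+1} − 2u_{i,j} + u_{i,j−1} + c₂₂u_{i,j} = 0, and u_{i+1,j} + u_{i−1,j} + u_{i,j+1} + u_{i,j−1} − u_{i+1,j−1} − u_{i−1,j+1} − 2u_{i,j} + 2c₁₂u_{i,j} = 0 for all (i,j) ∈ ℤ² if and only if there are constants C₁, C₂ ∈ ℝ with u_{i,j} = C₁ cos(ω₁i + ω₂j) + C₂ sin(ω₁i + ω₂j) for all (i,j). -/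
/-!
Rewriting the three equations as `u(x + v) + u(x - v) = 2 cos(ω·v) u(x)` for `v = e₁, e₂, e₁ - e₂`
shows at once that plane waves solve them. Conversely, say `sin ω₁ ≠ 0` (otherwise swap the axes),
and subtract from `u` the plane wave agreeing with it at `(0,0)` and `(1,0)`. The difference `w`
vanishes on the row `j = 0` by the recurrence along `e₁`. On the row `j = 1` the recurrences along
`e₂` and `e₁ - e₂` force `w(i+1,1) = w(i-1,1)`, and then the one along `e₁` gives
`w(i+1,1) = cos ω₁ · w(i,1)`, so `sin² ω₁ · w(i,1) = 0`. With two zero rows, the recurrence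
along `e₂` makes every column vanish.
-/

open Real

structure IsCosineKernel (ω₁ ω₂ : ℝ) (u : ℤ → ℤ → ℝ) : Prop where
  horiz : ∀ i j, u (i + 1) j + u (i - 1) j = 2 * cos ω₁ * u i j
  vert : ∀ i j, u i (j + 1) + u i (j - 1) = 2 * cos ω₂ * u i j
  diag : ∀ i j, u (i + 1) (j - 1) + u (i - 1) (j + 1) = 2 * cos (ω₁ - ω₂) * u i j

noncomputable def planeWave (ω₁ ω₂ C₁ C₂ : ℝ) (i j : ℤ) : ℝ :=
  C₁ * cos (ω₁ * i + ω₂ * j) + C₂ * sin (ω₁ * i + ω₂ * j)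

lemma eq_zero_of_add_add_sub_eq_mul {v : ℤ → ℝ} {t : ℝ}
    (h : ∀ i, v (i + 1) + v (i - 1) = t * v i) (h₀ : v 0 = 0) (h₁ : v 1 = 0) (i : ℤ) :
    v i = 0 := by
  suffices ∀ i, v i = 0 ∧ v (i + 1) = 0 from (this i).1
  intro i
  induction i using Int.induction_on with
  | zero => exact ⟨h₀, h₁⟩
  | succ n ih =>
    have := h (n + 1)
    rw [add_sub_cancel_right, ih.1, ih.2] at this
    exact ⟨ih.2, by linarith⟩
  | pred n ih =>
    have := h (-n)
    rw [ih.1, ih.2] at this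
    exact ⟨by linarith, by rw [sub_add_cancel]; exact ih.1⟩

section

variable {ω₁ ω₂ : ℝ} {u w : ℤ → ℤ → ℝ}

lemma isCosineKernel_iff :
    IsCosineKernel ω₁ ω₂ u ↔
    ((∀ i j : ℤ, u (i + 1) j - 2 * u i j + u (i - 1) j + (2 - 2 * cos ω₁) * u i j = 0) ∧
     (∀ i j : ℤ, u i (j + 1) - 2 * u i j + u i (j - 1) + (2 - 2 * cos ω₂) * u i j = 0) ∧
     (∀ i j : ℤ, u (i + 1) j + u (i - 1) j + u i (j + 1) + u i (j - 1)
        - u (i + 1) (j - 1) - u (i - 1) (j + 1) - 2 * u i j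
        + 2 * (1 + cos (ω₁ - ω₂) - cos ω₁ - cos ω₂) * u i j = 0)) := by
  constructor
  · rintro ⟨h₁, h₂, h₃⟩
    refine ⟨fun i j => ?_, fun i j => ?_, fun i j => ?_⟩
    · linear_combination h₁ i j
    · linear_combination h₂ i j
    · linear_combination h₁ i j + h₂ i j - h₃ i j
  · rintro ⟨h₁, h₂, h₃⟩
    refine ⟨fun i j => ?_, fun i j => ?_, fun i j => ?_⟩
    · linear_combination h₁ i j
    · linear_combination h₂ i j
    · linear_combination h₁ i j + h₂ i j - h₃ i j

lemma planeWave_add_add_sub (C₁ C₂ : ℝ) (i j a b : ℤ) :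
    planeWave ω₁ ω₂ C₁ C₂ (i + a) (j + b) + planeWave ω₁ ω₂ C₁ C₂ (i - a) (j - b) =
      2 * cos (ω₁ * a + ω₂ * b) * planeWave ω₁ ω₂ C₁ C₂ i j := by
  simp only [planeWave]
  push_cast
  rw [show ω₁ * (i + a) + ω₂ * (j + b) = (ω₁ * i + ω₂ * j) + (ω₁ * a + ω₂ * b) by ring,
    show ω₁ * (i - a) + ω₂ * (j - b) = (ω₁ * i + ω₂ * j) - (ω₁ * a + ω₂ * b) by ring]
  generalize ω₁ * i + ω₂ * j = x, ω₁ * a + ω₂ * b = θ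
  rw [cos_add, sin_add, cos_sub, sin_sub]
  ring

lemma isCosineKernel_planeWave (C₁ C₂ : ℝ) : IsCosineKernel ω₁ ω₂ (planeWave ω₁ ω₂ C₁ C₂) where
  horiz i j := by simpa using planeWave_add_add_sub C₁ C₂ i j 1 0
  vert i j := by simpa using planeWave_add_add_sub C₁ C₂ i j 0 1
  diag i j := by simpa [← sub_eq_add_neg] using planeWave_add_add_sub C₁ C₂ i j 1 (-1)

namespace IsCosineKernel

lemma sub (hu : IsCosineKernel ω₁ ω₂ u) (hw : IsCosineKernel ω₁ ω₂ w) :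
    IsCosineKernel ω₁ ω₂ (u - w) where
  horiz i j := by simp only [Pi.sub_apply]; linear_combination hu.horiz i j - hw.horiz i j
  vert i j := by simp only [Pi.sub_apply]; linear_combination hu.vert i j - hw.vert i j
  diag i j := by simp only [Pi.sub_apply]; linear_combination hu.diag i j - hw.diag i j

lemma transpose (hu : IsCosineKernel ω₁ ω₂ u) : IsCosineKernel ω₂ ω₁ (fun i j => u j i) where
  horiz i j := hu.vert j i
  vert i j := hu.horiz j i
  diag i j := by
    rw [← cos_neg, neg_sub]
    linear_combination hu.diag j i

lemma row_one_eq_zero (hw : IsCosineKernel ω₁ ω₂ w) (hs : sin ω₁ ≠ 0)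
    (row₀ : ∀ i, w i 0 = 0) (i : ℤ) : w i 1 = 0 := by
  have antisymm : ∀ i, w i (-1) = -w i 1 := fun i => by
    have := hw.vert i 0
    rw [row₀] at this
    norm_num at this
    linarith
  have periodic : ∀ i, w (i + 1) 1 = w (i - 1) 1 := fun i => by
    have := hw.diag i 0
    rw [row₀] at this
    norm_num at this
    rw [antisymm] at this
    linarith
  have step : ∀ i, w (i + 1) 1 = cos ω₁ * w i 1 := fun i => by
    linear_combination (hw.horiz i 1 + periodic i) / 2
  have h₁ := step i
  have h₂ := step (i + 1)
  have h₃ := periodic (i + 1)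
  rw [add_sub_cancel_right] at h₃
  have : sin ω₁ ^ 2 * w i 1 = 0 := by
    linear_combination w i 1 * sin_sq_add_cos_sq ω₁ + cos ω₁ * h₁ + h₂ - h₃
  exact (mul_eq_zero.mp this).resolve_left (pow_ne_zero 2 hs)

lemma eq_zero (hw : IsCosineKernel ω₁ ω₂ w) (hs : sin ω₁ ≠ 0) (h₀₀ : w 0 0 = 0)
    (h₁₀ : w 1 0 = 0) : w = 0 := by
  have row₀ : ∀ i, w i 0 = 0 :=
    eq_zero_of_add_add_sub_eq_mul (v := fun i => w i 0) (fun i => hw.horiz i 0) h₀₀ h₁₀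
  funext i j
  exact eq_zero_of_add_add_sub_eq_mul (v := w i) (hw.vert i) (row₀ i)
    (hw.row_one_eq_zero hs row₀ i) j

lemma exists_eq_planeWave_of_sin_ne_zero (hu : IsCosineKernel ω₁ ω₂ u) (hs : sin ω₁ ≠ 0) :
    ∃ C₁ C₂, u = planeWave ω₁ ω₂ C₁ C₂ := by
  set C₂ := (u 1 0 - u 0 0 * cos ω₁) / sin ω₁
  refine ⟨u 0 0, C₂, sub_eq_zero.mp ((hu.sub (isCosineKernel_planeWave _ _)).eq_zero hs ?_ ?_)⟩
  · simp [planeWave]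
  · simp only [Pi.sub_apply, planeWave, C₂, Int.cast_one, Int.cast_zero, mul_one, mul_zero,
      add_zero]
    field_simp
    ring

lemma exists_eq_planeWave (hu : IsCosineKernel ω₁ ω₂ u)
    (hω : ¬ ((∃ k : ℤ, ω₁ = k * π) ∧ (∃ k : ℤ, ω₂ = k * π))) :
    ∃ C₁ C₂, u = planeWave ω₁ ω₂ C₁ C₂ := by
  by_cases hs₁ : sin ω₁ = 0
  · have hs₂ : sin ω₂ ≠ 0 := fun hs₂ => hω
      ⟨(sin_eq_zero_iff.mp hs₁).imp fun _ => Eq.symm, (sin_eq_zero_iff.mp hs₂).imp fun _ => Eq.symm⟩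
    obtain ⟨C₁, C₂, h⟩ := hu.transpose.exists_eq_planeWave_of_sin_ne_zero hs₂
    refine ⟨C₁, C₂, funext₂ fun i j => ?_⟩
    rw [congrFun₂ h j i, planeWave, planeWave, add_comm (ω₂ * _)]
  · exact hu.exists_eq_planeWave_of_sin_ne_zero hs₁

end IsCosineKernel

end

/-- Discrete kernel characterization for oscillation TGV: for
`ω = (ω₁, ω₂) ∈ ℝ² ∖ πℤ²` and the matrix `c` with entries
`c₁₁ = 2 − 2cos ω₁`, `c₂₂ = 2 − 2cos ω₂`,
`c₁₂ = c₂₁ = 1 + cos(ω₁ − ω₂) − cos ω₁ − cos ω₂`, a function `u : ℤ² → ℝ`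
satisfies the discrete equations `E∇u + cu = 0` iff it is a discrete sinusoid. -/
theorem discrete_kernel_characterization (ω₁ ω₂ : ℝ)
    (hω : ¬ ((∃ k : ℤ, ω₁ = k * π) ∧ (∃ k : ℤ, ω₂ = k * π)))
    (u : ℤ → ℤ → ℝ) :
    ((∀ i j : ℤ, u (i + 1) j - 2 * u i j + u (i - 1) j + (2 - 2 * cos ω₁) * u i j = 0) ∧
     (∀ i j : ℤ, u i (j + 1) - 2 * u i j + u i (j - 1) + (2 - 2 * cos ω₂) * u i j = 0) ∧
     (∀ i j : ℤ, u (i + 1) j + u (i - 1) j + u i (j + 1) + u i (j - 1)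
        - u (i + 1) (j - 1) - u (i - 1) (j + 1) - 2 * u i j
        + 2 * (1 + cos (ω₁ - ω₂) - cos ω₁ - cos ω₂) * u i j = 0)) ↔
    ∃ C₁ C₂ : ℝ, ∀ i j : ℤ,
      u i j = C₁ * cos (ω₁ * i + ω₂ * j) + C₂ * sin (ω₁ * i + ω₂ * j) := by
  rw [← isCosineKernel_iff]
  constructor
  · intro hu
    obtain ⟨C₁, C₂, rfl⟩ := hu.exists_eq_planeWave hω
    exact ⟨C₁, C₂, fun _ _ => rfl⟩
  · rintro ⟨C₁, C₂, hu⟩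
    obtain rfl : u = planeWave ω₁ ω₂ C₁ C₂ := funext₂ hu
    exact isCosineKernel_planeWave C₁ C₂
end
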